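/- arXiv:1111.1977 — 2 statements merged into one kernel-verified Lean document; each statement's English description precedes it below -/
import Mathlib

section
/- For every $\delta \in (0,1]$, $\ln 2 \cdot \left(1 - h_2\left(\frac{1-\delta}{2}\right)\right) > \frac{\delta^2}{2}$, where $h_2$ is the binary entropy function to base 2. Hence the refined Azuma exponent strictly improves Azuma's exponent $\delta^2/2$ for all $\delta \in (0,1]$. -/
/-- Binary entropy function to base 2. -/
noncomputable def binEnt2 (x : ℝ) : ℝ := -(x * Real.logb 2 x) - (1 - x) * Real.logb 2 (1 - x)

/-!
With `p = (1 - δ) / 2`, the quantity `ln 2 · (1 - h₂ p)` is the divergence of Bernoulli(`p`) from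
Bernoulli(`1/2`), namely `((1 + δ) ln (1 + δ) + (1 - δ) ln (1 - δ)) / 2`. Subtracting `δ²` from
twice this gives a function vanishing at `0` whose derivative `ln (1 + δ) - ln (1 - δ) - 2δ` is
positive on `(0, 1)`, as the power series of `ln (1 + δ) - ln (1 - δ)` starts with `2δ` and has
positive coefficients.
-/

open Real Set

theorem two_mul_lt_log_one_add_sub_log_one_sub {x : ℝ} (hx₀ : 0 < x) (hx₁ : x < 1) :
    2 * x < log (1 + x) - log (1 - x) := by
  have hs := hasSum_log_sub_log_of_abs_lt_one (abs_lt.2 ⟨by linarith, hx₁⟩)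
  simpa using lt_hasSum hs 0 (fun _ _ ↦ by positivity) 1 one_ne_zero (by positivity)

theorem sq_lt_mul_log_one_add_add_mul_log_one_sub {δ : ℝ} (hδ₀ : 0 < δ) (hδ₁ : δ ≤ 1) :
    δ ^ 2 < (1 + δ) * log (1 + δ) + (1 - δ) * log (1 - δ) := by
  let g : ℝ → ℝ := fun t ↦ (1 + t) * log (1 + t) + (1 - t) * log (1 - t) - t ^ 2
  have hg : StrictMonoOn g (Icc 0 1) := by
    refine strictMonoOn_of_deriv_pos (convex_Icc 0 1) (by fun_prop) fun t ht ↦ ?_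
    rw [interior_Icc] at ht
    have hderiv : HasDerivAt g (log (1 + t) - log (1 - t) - 2 * t) t := by
      have hplus := (hasDerivAt_mul_log (x := 1 + t) (by linarith [ht.1])).comp t
        ((hasDerivAt_id t).const_add 1)
      have hminus := (hasDerivAt_mul_log (x := 1 - t) (by linarith [ht.2])).comp t
        ((hasDerivAt_id t).const_sub 1)
      exact ((hplus.add hminus).sub (hasDerivAt_pow 2 t)).congr_deriv (by push_cast; ring)
    rw [hderiv.deriv]
    linarith [two_mul_lt_log_one_add_sub_log_one_sub ht.1 ht.2]
  simpa [g] using hg ⟨le_rfl, zero_le_one⟩ ⟨hδ₀.le, hδ₁⟩ hδ₀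

theorem div_mul_log_div (x c : ℝ) : x / c * log (x / c) = (x * log x - x * log c) / c := by
  rcases eq_or_ne x 0 with rfl | hx
  · simp
  rcases eq_or_ne c 0 with rfl | hc
  · simp
  rw [log_div hx hc]
  ring

theorem log_two_sub_binEntropy_one_sub_div_two (δ : ℝ) :
    log 2 - binEntropy ((1 - δ) / 2) = ((1 + δ) * log (1 + δ) + (1 - δ) * log (1 - δ)) / 2 := by
  rw [binEntropy_eq_negMulLog_add_negMulLog_one_sub, show 1 - (1 - δ) / 2 = (1 + δ) / 2 by ring]
  simp only [negMulLog, neg_mul, div_mul_log_div]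
  ring

theorem binEnt2_eq_binEntropy_div_log_two (x : ℝ) : binEnt2 x = binEntropy x / log 2 := by
  simp only [binEnt2, binEntropy_eq_negMulLog_add_negMulLog_one_sub, negMulLog, logb]
  ring

/-- the refined Azuma exponent strictly improves `δ²/2` for `δ ∈ (0,1]`. -/
theorem stmt_4 (δ : ℝ) (hδ : δ ∈ Set.Ioc (0:ℝ) 1) :
    δ ^ 2 / 2 < Real.log 2 * (1 - binEnt2 ((1 - δ) / 2)) := by
  have hlog₂ : log 2 ≠ 0 := (log_pos one_lt_two).ne'
  rw [binEnt2_eq_binEntropy_div_log_two, mul_one_sub, mul_div_cancel₀ _ hlog₂,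
    log_two_sub_binEntropy_one_sub_div_two]
  linarith [sq_lt_mul_log_one_add_add_mul_log_one_sub hδ.1 hδ.2]
end

section
/- Let $X_1, X_2, \dots$ be i.i.d. Bernoulli($p$) random variables with $p \le 1/2$, and let $S_n = \sum_{i=1}^n X_i - np$. Then the refined Azuma inequality applied to the martingale $S_n$ yields, for every $\alpha \ge 0$, $\Pr(S_n \ge n\alpha) \le \exp(-n\, D(\alpha + p \,\|\, p))$, recovering the method-of-types upper bound $\Pr\left(\frac{1}{n}\sum_{i=1}^n X_i \ge r\right) \le e^{-nD(r\|p)}$ for $r \ge p$. -/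
/-!
Chernoff's method: for `t ≥ 0`, Markov's inequality applied to `exp (t S)` and independence bound
the tail by `(exp (-t r) (1 - p + p eᵗ))ⁿ` with `r = α + p`. For `p < r < 1` this is minimised at
`eᵗ = r (1 - p) / ((1 - r) p)`, where it equals `exp (-n D(r‖p))`; in the boundary cases
`p = 0`, `r = 1` and `r > 1` the bound is instead reached as `t → ∞`.
-/

open MeasureTheory ProbabilityTheory

/-- Binary relative entropy (KL divergence between Bernoulli(p) and Bernoulli(q)). -/
noncomputable def binKL (p q : ℝ) : ℝ :=
  p * Real.log (p / q) + (1 - p) * Real.log ((1 - p) / (1 - q))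

open Real Filter Topology

@[simp] lemma binKL_self (p : ℝ) : binKL p p = 0 := by simp [binKL]

lemma binKL_one_left (p : ℝ) : binKL 1 p = -log p := by simp [binKL, log_inv]

lemma exists_exp_neg_mul_mul_eq_exp_neg_binKL {p r : ℝ} (hp : 0 < p) (hpr : p ≤ r) (hr : r < 1) :
    ∃ t, 0 ≤ t ∧ exp (-t * r) * (1 - p + p * exp t) = exp (-binKL r p) := by
  have hr0 : 0 < r := hp.trans_le hpr
  have h1p : 0 < 1 - p := by linarith
  have h1r : 0 < 1 - r := by linarith
  refine ⟨log (r / p) - log ((1 - r) / (1 - p)), ?_, ?_⟩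
  · have : (1 - r) / (1 - p) ≤ r / p := by
      rw [div_le_div_iff₀ h1p hp]; nlinarith
    linarith [log_le_log (by positivity) this]
  · have hbase : 1 - p + p * exp (log (r / p) - log ((1 - r) / (1 - p))) =
        exp (-log ((1 - r) / (1 - p))) := by
      rw [exp_sub, exp_neg, exp_log (by positivity), exp_log (by positivity)]
      field_simp; ring
    rw [hbase, ← exp_add, binKL]
    congr 1; ring

lemma tendsto_exp_neg_mul_atTop {r : ℝ} (hr : 0 < r) :
    Tendsto (fun t => exp (-t * r)) atTop (𝓝 0) :=
  tendsto_exp_atBot.comp (tendsto_neg_atTop_atBot.atBot_mul_const hr)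

lemma tendsto_exp_neg_mul_mul_sub_atTop (p : ℝ) {r : ℝ} (hr : 0 < r) :
    Tendsto (fun t => exp (-t * r) * (1 - p + p * exp t) - p * exp (-t * (r - 1))) atTop
      (𝓝 0) := by
  have h := (tendsto_exp_neg_mul_atTop hr).const_mul (1 - p)
  rw [mul_zero] at h
  refine h.congr fun t => ?_
  rw [show -t * (r - 1) = -t * r + t by ring, exp_add]
  ring

theorem le_exp_neg_mul_binKL_of_forall_le {p r c : ℝ} (hp0 : 0 ≤ p) (hp1 : p ≤ 1) (hpr : p ≤ r)
    (n : ℕ) (hc : ∀ t, 0 ≤ t → c ≤ (exp (-t * r) * (1 - p + p * exp t)) ^ n) :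
    c ≤ exp (-n * binKL r p) := by
  rw [neg_mul, ← mul_neg, exp_nat_mul]
  have of_tendsto : ∀ L, 0 ≤ L → L ≤ exp (-binKL r p) →
      Tendsto (fun t => exp (-t * r) * (1 - p + p * exp t)) atTop (𝓝 L) →
      c ≤ exp (-binKL r p) ^ n := fun L hL hLD hlim =>
    (ge_of_tendsto (hlim.pow n) (eventually_ge_atTop 0 |>.mono hc)).trans
      (pow_le_pow_left₀ hL hLD n)
  rcases hpr.eq_or_lt with rfl | hpr
  · simpa using hc 0 le_rfl
  have hr : 0 < r := hp0.trans_lt hpr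
  have hdiff := tendsto_exp_neg_mul_mul_sub_atTop p hr
  rcases lt_trichotomy r 1 with hr1 | rfl | hr1
  · rcases hp0.eq_or_lt with rfl | hp
    · exact of_tendsto 0 le_rfl (exp_pos _).le (by simpa using hdiff)
    · obtain ⟨t, ht, hft⟩ := exists_exp_neg_mul_mul_eq_exp_neg_binKL hp hpr.le hr1
      exact hft ▸ hc t ht
  · refine of_tendsto p hp0 ?_ (by simpa using hdiff.add_const p)
    rw [binKL_one_left, neg_neg]
    rcases hp0.eq_or_lt with rfl | hp
    · exact (exp_pos _).le
    · rw [exp_log hp]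
  · have hlim := hdiff.add ((tendsto_exp_neg_mul_atTop (sub_pos.2 hr1)).const_mul p)
    exact of_tendsto 0 le_rfl (exp_pos _).le (by simpa using hlim)

section Chernoff

variable {Ω : Type*} [MeasurableSpace Ω] {μ : Measure Ω}

lemma exp_mul_ae_eq_of_ae_zero_or_one {Y : Ω → ℝ} (hY : ∀ᵐ ω ∂μ, Y ω = 0 ∨ Y ω = 1) (t : ℝ) :
    (fun ω => exp (t * Y ω)) =ᵐ[μ]
      fun ω => 1 + (exp t - 1) * {ω | Y ω = 1}.indicator 1 ω := by
  filter_upwards [hY] with ω h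
  rcases h with h | h <;> simp [h]

lemma integrable_exp_mul_of_ae_zero_or_one [IsFiniteMeasure μ] {Y : Ω → ℝ} (hYm : Measurable Y)
    (hY : ∀ᵐ ω ∂μ, Y ω = 0 ∨ Y ω = 1) (t : ℝ) :
    Integrable (fun ω => exp (t * Y ω)) μ := by
  refine Integrable.congr ?_ (exp_mul_ae_eq_of_ae_zero_or_one hY t).symm
  exact (integrable_const 1).add
    (((integrable_const 1).indicator (hYm (measurableSet_singleton 1))).const_mul _)

lemma mgf_eq_of_ae_zero_or_one [IsProbabilityMeasure μ] {Y : Ω → ℝ} (hYm : Measurable Y)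
    (hY : ∀ᵐ ω ∂μ, Y ω = 0 ∨ Y ω = 1) (t : ℝ) :
    mgf Y μ t = 1 - μ.real {ω | Y ω = 1} + μ.real {ω | Y ω = 1} * exp t := by
  have hset : MeasurableSet {ω | Y ω = 1} := hYm (measurableSet_singleton 1)
  rw [mgf, integral_congr_ae (exp_mul_ae_eq_of_ae_zero_or_one hY t),
    integral_add (integrable_const 1) (((integrable_const 1).indicator hset).const_mul _),
    integral_const_mul, integral_indicator_one hset]
  simp only [integral_const, probReal_univ, smul_eq_mul, mul_one]
  ring

theorem measureReal_sum_ge_le_of_bernoulli [IsProbabilityMeasure μ] {ι : Type*} {X : ι → Ω → ℝ}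
    (hmeas : ∀ i, Measurable (X i)) (hindep : iIndepFun X μ)
    (hvals : ∀ i, ∀ᵐ ω ∂μ, X i ω = 0 ∨ X i ω = 1) {p : ℝ}
    (hp : ∀ i, μ.real {ω | X i ω = 1} = p) (s : Finset ι) (a : ℝ) {t : ℝ} (ht : 0 ≤ t) :
    μ.real {ω | a ≤ ∑ i ∈ s, X i ω} ≤ exp (-t * a) * (1 - p + p * exp t) ^ s.card := by
  have hint := hindep.integrable_exp_mul_sum hmeas
    (s := s) fun i _ => integrable_exp_mul_of_ae_zero_or_one (hmeas i) (hvals i) t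
  have h := measure_ge_le_exp_mul_mgf a ht hint
  simpa only [Finset.sum_apply, hindep.mgf_sum hmeas, mgf_eq_of_ae_zero_or_one (hmeas _) (hvals _),
    hp, Finset.prod_const] using h

end Chernoff

theorem stmt_15_general {Ω : Type*} [MeasurableSpace Ω] (μ : Measure Ω) [IsProbabilityMeasure μ]
    (X : ℕ → Ω → ℝ) (p : ℝ) (hp0 : 0 ≤ p)
    (hmeas : ∀ i, Measurable (X i))
    (hindep : iIndepFun X μ)
    (hvals : ∀ i, ∀ᵐ ω ∂μ, X i ω = 0 ∨ X i ω = 1)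
    (hp1 : ∀ i, μ {ω | X i ω = 1} = ENNReal.ofReal p)
    (n : ℕ) (α : ℝ) (hα : 0 ≤ α) :
    (μ {ω | (n : ℝ) * α ≤ (∑ i ∈ Finset.range n, X i ω) - n * p}).toReal ≤
      Real.exp (-(n : ℝ) * binKL (α + p) p) := by
  have hp_le_one : p ≤ 1 := ENNReal.ofReal_le_one.1 (hp1 0 ▸ prob_le_one)
  have hpX : ∀ i, μ.real {ω | X i ω = 1} = p := fun i => by
    rw [measureReal_def, hp1 i, ENNReal.toReal_ofReal hp0]
  have hevent : {ω | (n : ℝ) * α ≤ (∑ i ∈ Finset.range n, X i ω) - n * p} =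
      {ω | n * (α + p) ≤ ∑ i ∈ Finset.range n, X i ω} := by
    ext ω; constructor <;> intro h <;> simp only [Set.mem_ofPred_eq] at h ⊢ <;> linarith
  rw [← measureReal_def, hevent]
  refine le_exp_neg_mul_binKL_of_forall_le hp0 hp_le_one (by linarith) n fun t ht => ?_
  have h := measureReal_sum_ge_le_of_bernoulli hmeas hindep hvals hpX (Finset.range n)
    (n * (α + p)) ht
  rw [Finset.card_range] at h
  rwa [mul_pow, ← exp_nat_mul, mul_left_comm]

/-- for i.i.d. Bernoulli(p) random variables with `p ≤ 1/2`, the refined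
Azuma inequality applied to the centered partial sums recovers the method-of-types
upper bound `exp(-n D(α + p ‖ p))`. -/
theorem stmt_15 {Ω : Type*} [MeasurableSpace Ω] (μ : Measure Ω) [IsProbabilityMeasure μ]
    (X : ℕ → Ω → ℝ) (p : ℝ) (hp0 : 0 ≤ p) (hp : p ≤ 1 / 2)
    (hmeas : ∀ i, Measurable (X i))
    (hindep : iIndepFun X μ)
    (hvals : ∀ i, ∀ᵐ ω ∂μ, X i ω = 0 ∨ X i ω = 1)
    (hp1 : ∀ i, μ {ω | X i ω = 1} = ENNReal.ofReal p)
    (n : ℕ) (α : ℝ) (hα : 0 ≤ α) :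
    (μ {ω | (n : ℝ) * α ≤ (∑ i ∈ Finset.range n, X i ω) - n * p}).toReal ≤
      Real.exp (-(n : ℝ) * binKL (α + p) p) :=
  stmt_15_general μ X p hp0 hmeas hindep hvals hp1 n α hα
end
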